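/- Let (X, μ) be a measure space, q ≥ 1, and let {f_j} be a sequence bounded in L^q(X, μ) converging μ-almost everywhere to f. Then ∫_X |f|^q dμ = lim_{j→∞} ( ∫_X |f_j|^q dμ - ∫_X |f_j - f|^q dμ ), provided the limit on the right-hand side exists (or along any subsequence for which both limits exist). -/

import Mathlib

open MeasureTheory Filter
open Real

lemma bl_mvt (q : ℝ) (hq : 1 ≤ q) {x y : ℝ} (hy : 0 ≤ y) (hxy : y ≤ x) :
    x ^ q - y ^ q ≤ q * x ^ (q - 1) * (x - y) := by
  rcases eq_or_lt_of_le (hy.trans hxy) with hx | hx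
  · have hy0 : y = 0 := le_antisymm (hx ▸ hxy) hy
    simp [← hx, hy0]
  · have hs : -1 ≤ y / x - 1 := by
      have : 0 ≤ y / x := div_nonneg hy hx.le
      linarith
    have hb := one_add_mul_self_le_rpow_one_add hs hq
    have h1 : (1 : ℝ) + (y / x - 1) = y / x := by ring
    rw [h1, div_rpow hy hx.le] at hb
    have hxq : (0:ℝ) < x ^ q := rpow_pos_of_pos hx q
    have h2 : x ^ (q - 1) = x ^ q / x := rpow_sub_one hx.ne' q
    rw [h2]
    have h3 : (1 + q * (y / x - 1)) * x ^ q ≤ y ^ q := by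
      calc (1 + q * (y / x - 1)) * x ^ q ≤ (y ^ q / x ^ q) * x ^ q :=
            mul_le_mul_of_nonneg_right hb hxq.le
        _ = y ^ q := by field_simp
    have h4 : q * (y / x - 1) * x ^ q = q * (x ^ q / x) * (y - x) := by
      field_simp
    nlinarith [hxq]

lemma bl_abs (q : ℝ) (hq : 1 ≤ q) (a b : ℝ) :
    abs (|a + b| ^ q - |a| ^ q) ≤ q * (|a| + |b|) ^ (q - 1) * |b| := by
  set x := max |a + b| |a| with hx
  set y := min |a + b| |a| with hy
  have hy0 : 0 ≤ y := le_min (abs_nonneg _) (abs_nonneg _)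
  have hxy : y ≤ x := min_le_max
  have h1 : abs (|a + b| ^ q - |a| ^ q) = x ^ q - y ^ q := by
    rcases le_total |a| |a+b| with h | h
    · rw [abs_of_nonneg (sub_nonneg.2
        (Real.rpow_le_rpow (abs_nonneg a) h (le_trans zero_le_one hq)))]
      rw [hx, hy, max_eq_left h, min_eq_right h]
    · rw [abs_of_nonpos (sub_nonpos.2
        (Real.rpow_le_rpow (abs_nonneg _) h (le_trans zero_le_one hq)))]
      rw [hx, hy, max_eq_right h, min_eq_left h]; ring
  have h2 : x ^ q - y ^ q ≤ q * x ^ (q - 1) * (x - y) := bl_mvt q hq hy0 hxy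
  have h3 : x - y ≤ |b| := by
    have := abs_abs_sub_abs_le_abs_sub (a + b) a
    simp only [add_sub_cancel_left] at this
    rcases le_total |a| |a+b| with h | h
    · rw [hx, hy, max_eq_left h, min_eq_right h]
      rw [abs_of_nonneg (by linarith)] at this; linarith
    · rw [hx, hy, max_eq_right h, min_eq_left h]
      rw [abs_of_nonpos (by linarith)] at this; linarith
  have h4 : x ^ (q-1) ≤ (|a| + |b|) ^ (q-1) := by
    apply Real.rpow_le_rpow (le_trans hy0 hxy) _ (by linarith)
    rw [hx]
    exact max_le (abs_add_le a b) (by simp [abs_nonneg])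
  have hq1 : 0 ≤ q * x ^ (q-1) := mul_nonneg (by linarith)
    (Real.rpow_nonneg (le_trans hy0 hxy) _)
  calc abs (|a + b| ^ q - |a| ^ q) = x ^ q - y ^ q := h1
    _ ≤ q * x ^ (q - 1) * (x - y) := h2
    _ ≤ q * x ^ (q - 1) * |b| := mul_le_mul_of_nonneg_left h3 hq1
    _ ≤ q * (|a| + |b|) ^ (q - 1) * |b| := by
        apply mul_le_mul_of_nonneg_right _ (abs_nonneg b)
        exact mul_le_mul_of_nonneg_left h4 (by linarith)

lemma bl_eps (q : ℝ) (hq : 1 ≤ q) {ε : ℝ} (hε : 0 < ε) :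
    ∃ C : ℝ, 0 ≤ C ∧ ∀ a b : ℝ,
      abs (|a + b| ^ q - |a| ^ q) ≤ ε * |a| ^ q + C * |b| ^ q := by
  rcases eq_or_lt_of_le hq with hq1 | hq1
  · refine ⟨1, zero_le_one, fun a b => ?_⟩
    rw [← hq1]
    simp only [Real.rpow_one, one_mul]
    have h1 := abs_abs_sub_abs_le_abs_sub (a + b) a
    simp only [add_sub_cancel_left] at h1
    have h2 : 0 ≤ ε * |a| := mul_nonneg hε.le (abs_nonneg a)
    linarith
  · set K := q * 2 ^ (q - 1) with hK
    have hK0 : 0 < K := mul_pos (by linarith) (Real.rpow_pos_of_pos two_pos _)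
    set δ := ε / K with hδ
    have hδ0 : 0 < δ := div_pos hε hK0
    refine ⟨K * (δ ^ (1 - q) + 1), le_of_lt (mul_pos hK0 (by positivity)), fun a b => ?_⟩
    rcases eq_or_ne b 0 with rfl | hb
    · simp only [add_zero, sub_self, abs_zero, abs_nonneg]
      rw [Real.zero_rpow (by linarith : q ≠ 0)]
      positivity
    have hb0 : 0 < |b| := abs_pos.2 hb
    have step1 := bl_abs q hq a b
    have step2 : (|a| + |b|) ^ (q - 1) ≤ 2 ^ (q - 1) * (|a| ^ (q-1) + |b| ^ (q-1)) := by
      have h1 : |a| + |b| ≤ 2 * max |a| |b| := by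
        rcases le_total |a| |b| with h | h
        · rw [max_eq_right h]; linarith
        · rw [max_eq_left h]; linarith
      calc (|a| + |b|) ^ (q - 1) ≤ (2 * max |a| |b|) ^ (q - 1) :=
            Real.rpow_le_rpow (by positivity) h1 (by linarith)
        _ = 2 ^ (q-1) * (max |a| |b|) ^ (q-1) :=
            Real.mul_rpow (by norm_num) (le_max_iff.2 (Or.inl (abs_nonneg a)))
        _ ≤ 2 ^ (q-1) * (|a| ^ (q-1) + |b| ^ (q-1)) := by
            apply mul_le_mul_of_nonneg_left _ (by positivity)
            rcases le_total |a| |b| with h | h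
            · rw [max_eq_right h]
              have : (0:ℝ) ≤ |a| ^ (q-1) := Real.rpow_nonneg (abs_nonneg a) _
              linarith
            · rw [max_eq_left h]
              have : (0:ℝ) ≤ |b| ^ (q-1) := Real.rpow_nonneg (abs_nonneg b) _
              linarith
    have hbq : |b| ^ (q - 1) * |b| = |b| ^ q := by
      rw [Real.rpow_sub_one hb0.ne' q, div_mul_cancel₀]
      exact hb0.ne'
    have step3 : |a| ^ (q-1) * |b| ≤ δ * |a| ^ q + δ ^ (1 - q) * |b| ^ q := by
      rcases le_total |b| (δ * |a|) with h | h
      · have ha0 : 0 < |a| := by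
          rcases (abs_nonneg a).eq_or_lt with h' | h'
          · exfalso; rw [← h'] at h; simp at h; exact hb h
          · exact h'
        have : |a| ^ (q-1) * |b| ≤ |a| ^ (q-1) * (δ * |a|) :=
          mul_le_mul_of_nonneg_left h (Real.rpow_nonneg (abs_nonneg a) _)
        have haq : |a| ^ (q - 1) * |a| = |a| ^ q := by
          rw [Real.rpow_sub_one ha0.ne' q, div_mul_cancel₀]
          exact ha0.ne'
        have h2 : (0:ℝ) ≤ δ ^ (1 - q) * |b| ^ q := by positivity
        nlinarith
      · have ha : |a| ≤ |b| / δ := by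
          rw [le_div_iff₀ hδ0]; linarith [mul_comm δ |a|]
        have h1 : |a| ^ (q-1) ≤ (|b| / δ) ^ (q-1) :=
          Real.rpow_le_rpow (abs_nonneg a) ha (by linarith)
        have h2 : (|b| / δ) ^ (q-1) = |b| ^ (q-1) / δ ^ (q-1) :=
          Real.div_rpow (abs_nonneg b) hδ0.le _
        have h3 : δ ^ (1-q) * δ ^ (q-1) = 1 := by
          rw [← Real.rpow_add hδ0]; norm_num
        have h4 : |b| ^ (q-1) / δ ^ (q-1) = δ ^ (1-q) * |b| ^ (q-1) := by
          field_simp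
          nlinarith [Real.rpow_nonneg (abs_nonneg b) (q-1)]
        have h5 : |a| ^ (q-1) * |b| ≤ δ ^ (1-q) * |b| ^ (q-1) * |b| := by
          apply mul_le_mul_of_nonneg_right _ (abs_nonneg b)
          rw [← h4, ← h2]; exact h1
        have h6 : (0:ℝ) ≤ δ * |a| ^ q := by positivity
        rw [mul_assoc, hbq] at h5
        linarith
    have hfin : q * (|a| + |b|) ^ (q - 1) * |b| ≤
        K * (|a| ^ (q-1) * |b| + |b| ^ q) := by
      have h1 : q * (|a| + |b|) ^ (q - 1) * |b| ≤
          q * (2 ^ (q - 1) * (|a| ^ (q-1) + |b| ^ (q-1))) * |b| := by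
        apply mul_le_mul_of_nonneg_right _ (abs_nonneg b)
        exact mul_le_mul_of_nonneg_left step2 (by linarith)
      calc q * (|a| + |b|) ^ (q - 1) * |b|
          ≤ q * (2 ^ (q - 1) * (|a| ^ (q-1) + |b| ^ (q-1))) * |b| := h1
        _ = K * (|a| ^ (q-1) * |b| + |b| ^ (q-1) * |b|) := by rw [hK]; ring
        _ = K * (|a| ^ (q-1) * |b| + |b| ^ q) := by rw [hbq]
    have hKδ : K * δ = ε := by
      rw [hδ]; field_simp
    calc abs (|a + b| ^ q - |a| ^ q) ≤ q * (|a| + |b|) ^ (q - 1) * |b| := step1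
      _ ≤ K * (|a| ^ (q-1) * |b| + |b| ^ q) := hfin
      _ ≤ K * ((δ * |a| ^ q + δ ^ (1 - q) * |b| ^ q) + |b| ^ q) := by
          apply mul_le_mul_of_nonneg_left _ hK0.le
          linarith
      _ = ε * |a| ^ q + K * (δ ^ (1 - q) + 1) * |b| ^ q := by
          rw [← hKδ]; ring

open MeasureTheory Filter

theorem brezis_lieb {X : Type*} [MeasurableSpace X] (μ : Measure X) (q : ℝ) (hq : 1 ≤ q)
    (f : ℕ → X → ℝ) (g : X → ℝ) (L : ℝ)
    (hmeas : ∀ j, AEStronglyMeasurable (f j) μ)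
    (hgmeas : AEStronglyMeasurable g μ)
    (hbdd : ∃ M : ℝ, ∀ j, (∫⁻ x, ENNReal.ofReal (|f j x| ^ q) ∂μ) ≤ ENNReal.ofReal M)
    (hae : ∀ᵐ x ∂μ, Tendsto (fun j => f j x) atTop (nhds (g x)))
    (hlim : Tendsto (fun j => (∫ x, |f j x| ^ q ∂μ) - ∫ x, |f j x - g x| ^ q ∂μ)
      atTop (nhds L)) :
    (∫ x, |g x| ^ q ∂μ) = L := by
  have hq0 : (0:ℝ) < q := lt_of_lt_of_le one_pos hq
  obtain ⟨M, hM⟩ := hbdd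
  set φfun : ℝ → ℝ := fun t => |t| ^ q with hφfun
  have hφcont : Continuous φfun := (Real.continuous_rpow_const hq0.le).comp continuous_abs
  have hφnonneg : ∀ t : ℝ, 0 ≤ φfun t := fun t => Real.rpow_nonneg (abs_nonneg t) q
  have hmA : ∀ j, AEStronglyMeasurable (fun x => |f j x| ^ q) μ :=
    fun j => hφcont.comp_aestronglyMeasurable (hmeas j)
  have hmG : AEStronglyMeasurable (fun x => |g x| ^ q) μ :=
    hφcont.comp_aestronglyMeasurable hgmeas
  have hmS : ∀ j, AEStronglyMeasurable (fun x => |f j x - g x| ^ q) μ :=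
    fun j => hφcont.comp_aestronglyMeasurable ((hmeas j).sub hgmeas)
  have hIA : ∀ j, Integrable (fun x => |f j x| ^ q) μ := by
    intro j
    refine ⟨hmA j, ?_⟩
    rw [hasFiniteIntegral_iff_ofReal (Eventually.of_forall fun x => hφnonneg _)]
    exact lt_of_le_of_lt (hM j) ENNReal.ofReal_lt_top
  have hGlim : ∀ᵐ x ∂μ, Tendsto (fun j => |f j x| ^ q) atTop (nhds (|g x| ^ q)) := by
    filter_upwards [hae] with x hx
    exact (hφcont.tendsto (g x)).comp hx
  have hGlint : (∫⁻ x, ENNReal.ofReal (|g x| ^ q) ∂μ) ≤ ENNReal.ofReal M := by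
    have h1 : ∀ᵐ x ∂μ, ENNReal.ofReal (|g x| ^ q)
        = liminf (fun j => ENNReal.ofReal (|f j x| ^ q)) atTop := by
      filter_upwards [hGlim] with x hx
      exact ((ENNReal.continuous_ofReal.tendsto _).comp hx).liminf_eq.symm
    calc (∫⁻ x, ENNReal.ofReal (|g x| ^ q) ∂μ)
        = ∫⁻ x, liminf (fun j => ENNReal.ofReal (|f j x| ^ q)) atTop ∂μ :=
          lintegral_congr_ae h1
      _ ≤ liminf (fun j => ∫⁻ x, ENNReal.ofReal (|f j x| ^ q) ∂μ) atTop :=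
          lintegral_liminf_le' (fun j =>
            ENNReal.measurable_ofReal.comp_aemeasurable (hmA j).aemeasurable)
      _ ≤ liminf (fun _ : ℕ => ENNReal.ofReal M) atTop :=
          Filter.liminf_le_liminf (Eventually.of_forall hM)
      _ = ENNReal.ofReal M := Filter.liminf_const _
  have hIG : Integrable (fun x => |g x| ^ q) μ := by
    refine ⟨hmG, ?_⟩
    rw [hasFiniteIntegral_iff_ofReal (Eventually.of_forall fun x => hφnonneg _)]
    exact lt_of_le_of_lt hGlint ENNReal.ofReal_lt_top
  have hsub_bound : ∀ u v : ℝ, |u - v| ^ q ≤ 2 ^ q * (|u| ^ q + |v| ^ q) := by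
    intro u v
    have h1 : |u - v| ≤ 2 * max |u| |v| := by
      have := abs_sub u v
      rcases le_total |u| |v| with h | h
      · rw [max_eq_right h]; linarith
      · rw [max_eq_left h]; linarith
    calc |u - v| ^ q ≤ (2 * max |u| |v|) ^ q :=
          Real.rpow_le_rpow (abs_nonneg _) h1 hq0.le
      _ = 2 ^ q * (max |u| |v|) ^ q :=
          Real.mul_rpow (by norm_num) (le_max_iff.2 (Or.inl (abs_nonneg u)))
      _ ≤ 2 ^ q * (|u| ^ q + |v| ^ q) := by
          apply mul_le_mul_of_nonneg_left _ (Real.rpow_nonneg (by norm_num) q)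
          rcases le_total |u| |v| with h | h
          · rw [max_eq_right h]
            have := Real.rpow_nonneg (abs_nonneg u) q
            linarith
          · rw [max_eq_left h]
            have := Real.rpow_nonneg (abs_nonneg v) q
            linarith
  have hIS : ∀ j, Integrable (fun x => |f j x - g x| ^ q) μ := fun j =>
    (((hIA j).add hIG).const_mul (2 ^ q)).mono' (hmS j)
      (Eventually.of_forall fun x => by
        rw [Real.norm_eq_abs, abs_of_nonneg (hφnonneg _)]
        exact hsub_bound _ _)
  set M' := max M 0 with hM'
  have hAM : ∀ j, (∫ x, |f j x| ^ q ∂μ) ≤ M' := by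
    intro j
    rw [integral_eq_lintegral_of_nonneg_ae (Eventually.of_forall fun x => hφnonneg _) (hmA j)]
    calc (∫⁻ x, ENNReal.ofReal (|f j x| ^ q) ∂μ).toReal
        ≤ (ENNReal.ofReal M').toReal := ENNReal.toReal_mono ENNReal.ofReal_ne_top
          ((hM j).trans (ENNReal.ofReal_le_ofReal (le_max_left M 0)))
      _ = M' := ENNReal.toReal_ofReal (le_max_right M 0)
  set B := 2 ^ q * (M' + ∫ x, |g x| ^ q ∂μ) with hB
  have hψB : ∀ j, (∫ x, |f j x - g x| ^ q ∂μ) ≤ B := by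
    intro j
    calc (∫ x, |f j x - g x| ^ q ∂μ)
        ≤ ∫ x, 2 ^ q * (|f j x| ^ q + |g x| ^ q) ∂μ :=
          integral_mono (hIS j) (((hIA j).add hIG).const_mul _)
            (fun x => hsub_bound (f j x) (g x))
      _ = 2 ^ q * ((∫ x, |f j x| ^ q ∂μ) + ∫ x, |g x| ^ q ∂μ) := by
          rw [integral_const_mul, integral_add (hIA j) hIG]
      _ ≤ B := by
          rw [hB]
          apply mul_le_mul_of_nonneg_left _ (Real.rpow_nonneg (by norm_num) q)
          linarith [hAM j]
  have hB0 : 0 ≤ B := le_trans (integral_nonneg fun x => hφnonneg (f 0 x - g x)) (hψB 0)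
  -- key estimate
  have key : ∀ ε : ℝ, 0 < ε → ∀ᶠ j in atTop,
      |((∫ x, |f j x| ^ q ∂μ) - ∫ x, |f j x - g x| ^ q ∂μ) - ∫ x, |g x| ^ q ∂μ|
        ≤ ε * (1 + B) := by
    intro ε hε
    obtain ⟨C, hC0, hC⟩ := bl_eps q hq hε
    set W : ℕ → X → ℝ := fun j x =>
      max (|(|f j x| ^ q - |f j x - g x| ^ q) - |g x| ^ q| - ε * |f j x - g x| ^ q) 0
      with hW
    have hWnonneg : ∀ j x, 0 ≤ W j x := fun j x => le_max_right _ _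
    have hWle : ∀ j x, W j x ≤ (C + 1) * |g x| ^ q := by
      intro j x
      apply max_le _ (by positivity)
      have h1 := hC (f j x - g x) (g x)
      rw [sub_add_cancel] at h1
      have h2 : |(|f j x| ^ q - |f j x - g x| ^ q) - |g x| ^ q|
          ≤ |(|f j x| ^ q - |f j x - g x| ^ q)| + |g x| ^ q := by
        have := abs_sub (|f j x| ^ q - |f j x - g x| ^ q) (|g x| ^ q)
        rwa [abs_of_nonneg (hφnonneg (g x))] at this
      nlinarith
    have hWmeas : ∀ j, AEStronglyMeasurable (W j) μ := by
      intro j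
      apply AEMeasurable.aestronglyMeasurable
      have h1 := ((hmA j).aemeasurable.sub (hmS j).aemeasurable).sub hmG.aemeasurable
      exact ((continuous_abs.measurable.comp_aemeasurable h1).sub
        ((hmS j).aemeasurable.const_mul ε)).max aemeasurable_const
    have hWint : ∀ j, Integrable (W j) μ := fun j =>
      (hIG.const_mul (C + 1)).mono' (hWmeas j)
        (Eventually.of_forall fun x => by
          rw [Real.norm_eq_abs, abs_of_nonneg (hWnonneg j x)]
          exact hWle j x)
    have hWtend : Tendsto (fun j => ∫ x, W j x ∂μ) atTop (nhds 0) := by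
      have h0 : (0:ℝ) = ∫ x, (0:ℝ) ∂μ := by simp
      rw [h0]
      apply tendsto_integral_of_dominated_convergence (fun x => (C + 1) * |g x| ^ q)
        hWmeas (hIG.const_mul (C + 1))
      · exact fun j => Eventually.of_forall fun x => by
          rw [Real.norm_eq_abs, abs_of_nonneg (hWnonneg j x)]
          exact hWle j x
      · filter_upwards [hae] with x hx
        have hφt : Tendsto (fun j => |f j x| ^ q) atTop (nhds (|g x| ^ q)) :=
          (hφcont.tendsto (g x)).comp hx
        have hst : Tendsto (fun j => f j x - g x) atTop (nhds 0) := by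
          have := hx.sub (tendsto_const_nhds (x := g x))
          rwa [sub_self] at this
        have hψt : Tendsto (fun j => |f j x - g x| ^ q) atTop (nhds 0) := by
          have h1 := (hφcont.tendsto 0).comp hst
          have h2 : φfun 0 = 0 := by
            simp only [hφfun, abs_zero]
            exact Real.zero_rpow hq0.ne'
          rwa [h2] at h1
        have hmain : Tendsto (fun j =>
            |(|f j x| ^ q - |f j x - g x| ^ q) - |g x| ^ q| - ε * |f j x - g x| ^ q)
            atTop (nhds 0) := by
          have h1 := ((hφt.sub hψt).sub (tendsto_const_nhds (x := |g x| ^ q))).abs.sub (hψt.const_mul ε)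
          simp only [sub_zero, sub_self, abs_zero, mul_zero] at h1
          exact h1
        have := hmain.max (tendsto_const_nhds (x := (0:ℝ)))
        rwa [max_self] at this
    have hWsmall : ∀ᶠ j in atTop, (∫ x, W j x ∂μ) < ε :=
      hWtend.eventually (gt_mem_nhds hε)
    filter_upwards [hWsmall] with j hj
    have hI1 : Integrable (fun x => |f j x| ^ q - |f j x - g x| ^ q) μ :=
      (hIA j).sub (hIS j)
    have hsplit : ((∫ x, |f j x| ^ q ∂μ) - ∫ x, |f j x - g x| ^ q ∂μ) - ∫ x, |g x| ^ q ∂μ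
        = ∫ x, ((|f j x| ^ q - |f j x - g x| ^ q) - |g x| ^ q) ∂μ := by
      rw [integral_sub hI1 hIG, integral_sub (hIA j) (hIS j)]
    rw [hsplit]
    have habs : |∫ x, ((|f j x| ^ q - |f j x - g x| ^ q) - |g x| ^ q) ∂μ|
        ≤ ∫ x, |(|f j x| ^ q - |f j x - g x| ^ q) - |g x| ^ q| ∂μ := by
      have := norm_integral_le_integral_norm
        (fun x => (|f j x| ^ q - |f j x - g x| ^ q) - |g x| ^ q) (μ := μ)
      simpa only [Real.norm_eq_abs] using this
    have hptw : ∀ x, |(|f j x| ^ q - |f j x - g x| ^ q) - |g x| ^ q|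
        ≤ W j x + ε * |f j x - g x| ^ q := by
      intro x
      have hWx : W j x = max
          (|(|f j x| ^ q - |f j x - g x| ^ q) - |g x| ^ q| - ε * |f j x - g x| ^ q) 0 := rfl
      rw [hWx]
      have := le_max_left
        (|(|f j x| ^ q - |f j x - g x| ^ q) - |g x| ^ q| - ε * |f j x - g x| ^ q) (0:ℝ)
      linarith [this]
    have hint2 : (∫ x, |(|f j x| ^ q - |f j x - g x| ^ q) - |g x| ^ q| ∂μ)
        ≤ (∫ x, W j x ∂μ) + ε * ∫ x, |f j x - g x| ^ q ∂μ := by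
      calc (∫ x, |(|f j x| ^ q - |f j x - g x| ^ q) - |g x| ^ q| ∂μ)
          ≤ ∫ x, (W j x + ε * |f j x - g x| ^ q) ∂μ := by
            apply integral_mono (((hIA j).sub (hIS j)).sub hIG).abs
              ((hWint j).add ((hIS j).const_mul ε)) hptw
        _ = (∫ x, W j x ∂μ) + ε * ∫ x, |f j x - g x| ^ q ∂μ := by
            rw [integral_add (hWint j) ((hIS j).const_mul ε), integral_const_mul]
    have hψj := hψB j
    calc |∫ x, ((|f j x| ^ q - |f j x - g x| ^ q) - |g x| ^ q) ∂μ|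
        ≤ (∫ x, W j x ∂μ) + ε * ∫ x, |f j x - g x| ^ q ∂μ := le_trans habs hint2
      _ ≤ ε + ε * B := by
          have := mul_le_mul_of_nonneg_left hψj hε.le
          linarith
      _ = ε * (1 + B) := by ring
  -- conclude
  have hDlim : Tendsto (fun j => (∫ x, |f j x| ^ q ∂μ) - ∫ x, |f j x - g x| ^ q ∂μ)
      atTop (nhds (∫ x, |g x| ^ q ∂μ)) := by
    rw [Metric.tendsto_atTop]
    intro ε hε
    have hd : (0:ℝ) < ε / (2 * (1 + B)) := by positivity
    obtain ⟨N, hN⟩ := (key _ hd).exists_forall_of_atTop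
    refine ⟨N, fun n hn => ?_⟩
    have h1 := hN n hn
    rw [Real.dist_eq]
    have h2 : ε / (2 * (1 + B)) * (1 + B) = ε / 2 := by
      field_simp
    rw [h2] at h1
    linarith
  exact tendsto_nhds_unique hDlim hlim
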